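/- arXiv:2510.21642 — 12 statements merged into one kernel-verified Lean document; each statement's English description precedes it below -/
import Mathlib

section
/- Every κ-Fréchet–Urysohn topological space is open-compact attainable. -/
open Filter Topology Set

def KappaFU (X : Type*) [TopologicalSpace X] : Prop :=
  ∀ U : Set X, IsOpen U → ∀ x ∈ closure U,
    ∃ u : ℕ → X, (∀ n, u n ∈ U) ∧ Filter.Tendsto u Filter.atTop (nhds x)

def OCA (X : Type*) [TopologicalSpace X] : Prop :=
  ∀ W : Set X, IsOpen W → ∀ z ∈ closure W,
    ∃ K : Set X, IsCompact K ∧ z ∈ K ∧ z ∈ closure (K ∩ W)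

def WOCA (X : Type*) [TopologicalSpace X] : Prop :=
  ∀ W : Set X, IsOpen W → ¬ IsClosed W →
    ∃ z ∈ closure W \ W, ∃ K : Set X, IsCompact K ∧ z ∈ K ∧ z ∈ closure (K ∩ W)

def KappaSeq (X : Type*) [TopologicalSpace X] : Prop :=
  ∀ W : Set X, IsOpen W → ¬ IsClosed W →
    ∃ z ∈ closure W \ W, ∃ u : ℕ → X, (∀ n, u n ∈ W) ∧ Filter.Tendsto u Filter.atTop (nhds z)

def KappaPseudoOpen {X Y : Type*} [TopologicalSpace X] [TopologicalSpace Y] (f : X → Y) : Prop :=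
  ∀ (y : Y) (U : Set X), IsOpen U → f ⁻¹' {y} ⊆ U → y ∈ interior (closure (f '' U))

def WeaklyKappaPseudoOpen {X Y : Type*} [TopologicalSpace X] [TopologicalSpace Y] (f : X → Y) : Prop :=
  ∀ U : Set Y, IsOpen U → (IsClosed U ↔ IsClosed (f ⁻¹' U))

theorem kappaFU_implies_OCA (X : Type*) [TopologicalSpace X]
    (h : KappaFU X) : OCA X := by
  intro W hW z hz
  obtain ⟨u, huW, hu⟩ := h W hW z hz
  refine ⟨insert z (Set.range u), ?_, Set.mem_insert _ _, ?_⟩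
  · exact (hu.isCompact_insert_range)
  · exact mem_closure_of_tendsto hu (Filter.Eventually.of_forall fun n =>
      ⟨Set.mem_insert_of_mem _ ⟨n, rfl⟩, huW n⟩)
end

section
/- If X is a topological space in which every compact subset is Fréchet–Urysohn, then X is open-compact attainable if and only if X is κ-Fréchet–Urysohn. -/
open Filter Topology Set

theorem OCA_iff_kappaFU_of_compact_FrechetUrysohn (X : Type*) [TopologicalSpace X]
    (h : ∀ K : Set X, IsCompact K → FrechetUrysohnSpace K) :
    OCA X ↔ KappaFU X := by
  constructor
  · intro hoca U hU x hx
    obtain ⟨K, hK, hxK, hxc⟩ := hoca U hU x hx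
    haveI := h K hK
    set s : Set K := Subtype.val ⁻¹' (K ∩ U)
    have hxcs : (⟨x, hxK⟩ : K) ∈ closure s := by
      rw [IsInducing.subtypeVal.closure_eq_preimage_closure_image]
      have : Subtype.val '' s = K ∩ U := by
        rw [Subtype.image_preimage_coe]
        simp [Set.inter_comm]
      rw [this]
      exact hxc
    obtain ⟨v, hv, hvt⟩ := mem_closure_iff_seq_limit.mp hxcs
    refine ⟨fun n => (v n : X), fun n => (hv n).2, ?_⟩
    exact (continuous_subtype_val.tendsto _).comp hvt
  · intro hfu W hW z hz
    obtain ⟨u, hu, hut⟩ := hfu W hW z hz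
    refine ⟨insert z (Set.range u), hut.isCompact_insert_range, Set.mem_insert _ _, ?_⟩
    refine mem_closure_of_tendsto hut (Filter.Eventually.of_forall fun n => ?_)
    exact ⟨Set.mem_insert_of_mem _ ⟨n, rfl⟩, hu n⟩
end

section
/- If X is a topological space in which every compact subset is Fréchet–Urysohn, then X is weakly open-compact attainable if and only if X is κ-sequential. -/
open Filter Topology Set

theorem WOCA_iff_kappaSeq_of_compact_FrechetUrysohn (X : Type*) [TopologicalSpace X]
    (h : ∀ K : Set X, IsCompact K → FrechetUrysohnSpace K) :
    WOCA X ↔ KappaSeq X := by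
  constructor
  · intro hw W hWopen hWnc
    obtain ⟨z, hz, K, hKc, hzK, hzcl⟩ := hw W hWopen hWnc
    haveI := h K hKc
    have hz' : (⟨z, hzK⟩ : K) ∈ closure (Subtype.val ⁻¹' W : Set K) := by
      rw [closure_subtype]
      simpa [Subtype.image_preimage_coe, inter_comm] using hzcl
    obtain ⟨u, hu, hut⟩ := mem_closure_iff_seq_limit.mp hz'
    refine ⟨z, hz, fun n => (u n : X), fun n => hu n, ?_⟩
    exact (continuous_subtype_val.tendsto _).comp hut
  · intro hs W hWopen hWnc
    obtain ⟨z, hz, u, hu, hut⟩ := hs W hWopen hWnc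
    refine ⟨z, hz, insert z (Set.range u), hut.isCompact_insert_range, mem_insert _ _, ?_⟩
    exact mem_closure_of_tendsto hut (Filter.Eventually.of_forall fun n =>
      ⟨subset_insert _ _ ⟨n, rfl⟩, hu n⟩)
end

section
/- Every path-connected topological space is κ-sequential. -/
open Filter Topology Set

theorem pathConnected_implies_kappaSeq (X : Type*) [TopologicalSpace X]
    [PathConnectedSpace X] : KappaSeq X := by
  intro W hWopen hWnc
  have hWne : W.Nonempty := by
    rcases W.eq_empty_or_nonempty with h | h
    · exact absurd (h ▸ isClosed_empty) hWnc
    · exact h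
  obtain ⟨w, hw⟩ := hWne
  obtain ⟨z, hzcl, hzW⟩ : (closure W \ W).Nonempty := by
    rw [Set.diff_nonempty]
    exact fun h => hWnc (isClosed_of_closure_subset h)
  set γ : Path w z := PathConnectedSpace.somePath w z with hγ
  set S : Set unitInterval := (γ : unitInterval → X) ⁻¹' Wᶜ with hS
  have hSclosed : IsClosed S := (hWopen.isClosed_compl).preimage γ.continuous
  have hSne : S.Nonempty := ⟨1, by simp [hS, γ.target, hzW]⟩
  obtain ⟨t₀, ht₀S, ht₀least⟩ := hSclosed.isCompact.exists_isLeast hSne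
  have ht₀W : γ t₀ ∉ W := ht₀S
  have hlt : ∀ t : unitInterval, t < t₀ → γ t ∈ W := by
    intro t ht
    by_contra h
    exact absurd (ht₀least h) (not_le_of_gt ht)
  have h0 : (0 : ℝ) < (t₀ : ℝ) := by
    rcases lt_or_eq_of_le (t₀.2.1 : (0:ℝ) ≤ t₀.1) with h | h
    · exact h
    · exfalso
      have h0eq : (0 : unitInterval) = t₀ := Subtype.ext h
      have : γ (0 : unitInterval) ∉ W := h0eq ▸ ht₀W
      exact this (by simpa [γ.source] using hw)
  -- the real sequence
  set r : ℕ → ℝ := fun n => (t₀ : ℝ) - (t₀ : ℝ) / (n + 2) with hr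
  have hrmem : ∀ n, r n ∈ Set.Icc (0:ℝ) 1 := by
    intro n
    have hn2 : (0:ℝ) < (n:ℝ) + 2 := by positivity
    constructor
    · have : (t₀ : ℝ) / (n + 2) ≤ (t₀ : ℝ) := by
        rw [div_le_iff₀ hn2]
        nlinarith
      simpa [hr] using sub_nonneg.mpr this
    · have h1 : (t₀ : ℝ) ≤ 1 := t₀.2.2
      have h2 : 0 < (t₀ : ℝ) / (n + 2) := by positivity
      simp only [hr]
      linarith
  have hrlt : ∀ n, r n < (t₀ : ℝ) := by
    intro n
    have hn2 : (0:ℝ) < (n:ℝ) + 2 := by positivity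
    have : 0 < (t₀ : ℝ) / (n + 2) := by positivity
    simp only [hr]; linarith
  set s : ℕ → unitInterval := fun n => ⟨r n, hrmem n⟩ with hs
  have hstend : Tendsto s atTop (nhds t₀) := by
    rw [tendsto_subtype_rng]
    have h1 : Tendsto (fun n : ℕ => (t₀ : ℝ) / (n + 2)) atTop (nhds 0) := by
      have := (tendsto_const_div_atTop_nhds_zero_nat ((t₀ : ℝ))).comp
        (tendsto_add_atTop_nat 2)
      simp only [Function.comp_def] at this
      push_cast at this
      exact this
    have h2 : Tendsto (fun n : ℕ => (t₀ : ℝ) - (t₀ : ℝ) / (n + 2)) atTop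
        (nhds ((t₀ : ℝ) - 0)) := tendsto_const_nhds.sub h1
    simpa [hr] using h2
  refine ⟨γ t₀, ⟨?_, ht₀W⟩, fun n => γ (s n), fun n => hlt _ ?_, ?_⟩
  · exact mem_closure_of_tendsto (γ.continuous.continuousAt.tendsto.comp hstend)
      (Eventually.of_forall fun n => hlt _ (Subtype.mk_lt_mk.mpr (hrlt n)))
  · exact Subtype.mk_lt_mk.mpr (hrlt n)
  · exact γ.continuous.continuousAt.tendsto.comp hstend
end

section
/- Every s_R-space is κ-sequential. -/
open Filter Topology Set

theorem sR_implies_kappaSeq (X : Type*) [TopologicalSpace X]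
    (h : ∀ f : X → ℝ,
      (∀ (u : ℕ → X) (x : X), Filter.Tendsto u Filter.atTop (nhds x) →
        Filter.Tendsto (fun n => f (u n)) Filter.atTop (nhds (f x))) →
      Continuous f) : KappaSeq X := by
  classical
  intro W hWopen hWnc
  by_contra hcon
  push_neg at hcon
  set f : X → ℝ := fun x => if x ∈ W then 1 else 0 with hf
  have hseq : ∀ (u : ℕ → X) (x : X), Filter.Tendsto u Filter.atTop (nhds x) →
      Filter.Tendsto (fun n => f (u n)) Filter.atTop (nhds (f x)) := by
    intro u x hux
    by_cases hx : x ∈ W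
    · have hev : ∀ᶠ n in atTop, f (u n) = f x := by
        filter_upwards [hux (hWopen.mem_nhds hx)] with n hn
        simp [hf, hx, show u n ∈ W from hn]
      exact Filter.Tendsto.congr' (Filter.EventuallyEq.symm hev) tendsto_const_nhds
    · have hx0 : f x = 0 := by simp [hf, hx]
      by_cases hxc : x ∈ closure W
      · have hev : ∀ᶠ n in atTop, u n ∉ W := by
          by_contra hne
          rw [Filter.not_eventually] at hne
          obtain ⟨φ, hφ, hφW⟩ :=
            Filter.extraction_of_frequently_atTop (hne.mono fun n hn => not_not.mp hn)
          exact hcon x ⟨hxc, hx⟩ (u ∘ φ) hφW (hux.comp hφ.tendsto_atTop)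
        have hev' : ∀ᶠ n in atTop, f (u n) = f x := by
          filter_upwards [hev] with n hn
          simp [hf, hn, hx]
        exact Filter.Tendsto.congr' (Filter.EventuallyEq.symm hev') tendsto_const_nhds
      · have hev : ∀ᶠ n in atTop, u n ∉ W := by
          filter_upwards [hux (isOpen_compl_iff.mpr isClosed_closure |>.mem_nhds hxc)] with n hn
          exact fun hw => hn (subset_closure hw)
        have hev' : ∀ᶠ n in atTop, f (u n) = f x := by
          filter_upwards [hev] with n hn
          simp [hf, hn, hx]
        exact Filter.Tendsto.congr' (Filter.EventuallyEq.symm hev') tendsto_const_nhds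
  have hcont := h f hseq
  apply hWnc
  have hWeq : W = f ⁻¹' {1} := by
    ext x
    simp only [Set.mem_preimage, Set.mem_singleton_iff, hf]
    by_cases hx : x ∈ W <;> simp [hx]
  rw [hWeq]
  exact isClosed_singleton.preimage hcont
end

section
/- If X is a T1 topological space with exactly one non-isolated point and X is κ-sequential, then X is Fréchet–Urysohn. -/
open Filter Topology Set

theorem kappaSeq_one_nonisolated_implies_FU (X : Type*) [TopologicalSpace X] [T1Space X]
    (hx : ∃! x : X, ¬ IsOpen ({x} : Set X)) (h : KappaSeq X) :
    ∀ A : Set X, ∀ a ∈ closure A,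
      ∃ u : ℕ → X, (∀ n, u n ∈ A) ∧ Filter.Tendsto u Filter.atTop (nhds a) := by
  obtain ⟨x₀, hx₀, huniq⟩ := hx
  intro A a ha
  by_cases haA : a ∈ A
  · exact ⟨fun _ => a, fun _ => haA, tendsto_const_nhds⟩
  -- a is not isolated
  have ha_not : ¬ IsOpen ({a} : Set X) := by
    intro hop
    obtain ⟨y, hy1, hy2⟩ := mem_closure_iff.mp ha {a} hop rfl
    exact haA (hy1 ▸ hy2)
  have hax : a = x₀ := huniq a ha_not
  -- every point of A is isolated
  have hAopen : IsOpen A := by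
    have : A = ⋃ y ∈ A, ({y} : Set X) := by
      ext z; simp
    rw [this]
    apply isOpen_biUnion
    intro y hy
    by_contra hno
    have : y = a := (huniq y hno).trans hax.symm
    exact haA (this ▸ hy)
  have hAnc : ¬ IsClosed A := fun hc => haA (hc.closure_eq ▸ ha)
  obtain ⟨z, ⟨hz1, hz2⟩, u, hu, htend⟩ := h A hAopen hAnc
  have hz_not : ¬ IsOpen ({z} : Set X) := by
    intro hop
    obtain ⟨y, hy1, hy2⟩ := mem_closure_iff.mp hz1 {z} hop rfl
    exact hz2 (hy1 ▸ hy2)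
  have : z = a := (huniq z hz_not).trans hax.symm
  exact ⟨u, hu, this ▸ htend⟩
end

section
/- A non-discrete T1 topological space in which every compact subset is finite is not weakly open-compact attainable. -/
open Filter Topology Set

theorem discreteTopology_of_forall_isOpen_isClosed {X : Type*} [TopologicalSpace X] [T1Space X]
    (h : ∀ W : Set X, IsOpen W → IsClosed W) : DiscreteTopology X :=
  discreteTopology_iff_isOpen_singleton.mpr fun _ =>
    isClosed_compl_iff.mp (h _ isOpen_compl_singleton)

/- The point `z` supplied by `WOCA` lies in the closure of the finite, hence closed, set `K ∩ W`,
so it lies in `W`. -/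
theorem WOCA.isClosed_of_isOpen {X : Type*} [TopologicalSpace X] [T1Space X] (hw : WOCA X)
    (h : ∀ K : Set X, IsCompact K → K.Finite) {W : Set X} (hW : IsOpen W) : IsClosed W := by
  by_contra hWc
  obtain ⟨z, ⟨-, hzW⟩, K, hK, -, hzKW⟩ := hw W hW hWc
  rw [((h K hK).inter_of_left W).isClosed.closure_eq] at hzKW
  exact hzW hzKW.2

theorem not_WOCA_of_nondiscrete_finite_compacts (X : Type*) [TopologicalSpace X] [T1Space X]
    (hnd : ¬ DiscreteTopology X) (h : ∀ K : Set X, IsCompact K → K.Finite) :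
    ¬ WOCA X := fun hw =>
  hnd <| discreteTopology_of_forall_isOpen_isClosed fun _ hW => hw.isClosed_of_isOpen h hW
end

section
/- Let f : X → Y be a continuous surjection between topological spaces. Then f is κ-pseudo open if and only if closure(U) = f(closure(f⁻¹(U))) for every open subset U of Y. -/
open Filter Topology Set

theorem kappaPseudoOpen_iff_closure_eq {X Y : Type*} [TopologicalSpace X] [TopologicalSpace Y]
    (f : X → Y) (hf : Continuous f) (hsurj : Function.Surjective f) :
    KappaPseudoOpen f ↔ ∀ U : Set Y, IsOpen U → closure U = f '' closure (f ⁻¹' U) := by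
  constructor
  · intro hpo U hU
    apply Set.Subset.antisymm
    · intro y hy
      by_contra hy'
      have hV : IsOpen (closure (f ⁻¹' U))ᶜ := isClosed_closure.isOpen_compl
      have hsub : f ⁻¹' {y} ⊆ (closure (f ⁻¹' U))ᶜ := by
        intro x hx
        intro hxc
        exact hy' ⟨x, hxc, hx⟩
      have h2 := hpo y _ hV hsub
      have hmem : y ∈ interior (closure (f '' (closure (f ⁻¹' U))ᶜ)) := h2
      obtain ⟨u, huU, hu2⟩ := mem_closure_iff.mp hy _ isOpen_interior hmem
      have hu3 : u ∈ closure (f '' (closure (f ⁻¹' U))ᶜ) := interior_subset huU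
      obtain ⟨z, hzU, hz⟩ := mem_closure_iff.mp hu3 U hU hu2
      obtain ⟨x, hx, rfl⟩ := hz
      exact hx (subset_closure hzU)
    · calc f '' closure (f ⁻¹' U) ⊆ closure (f '' (f ⁻¹' U)) :=
            image_closure_subset_closure_image hf
        _ ⊆ closure U := closure_mono (image_preimage_subset f U)
  · intro h y U hU hsub
    rw [← compl_compl (interior (closure (f '' U))), mem_compl_iff,
      ← closure_compl]
    intro hy
    rw [h _ isClosed_closure.isOpen_compl] at hy
    obtain ⟨x, hx, rfl⟩ := hy
    have hxU : x ∈ U := hsub rfl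
    obtain ⟨x', hx'U, hx'⟩ := mem_closure_iff.mp hx U hU hxU
    exact hx' (subset_closure ⟨x', hx'U, rfl⟩)
end

section
/- Let f : X → Y be a continuous surjection between topological spaces. Then f is κ-pseudo open if and only if for every open non-closed subset U of Y and every y ∈ (closure U) \ U, the set f⁻¹({y}) ∩ closure(f⁻¹(U)) is nonempty. -/
open Filter Topology Set

theorem kappaPseudoOpen_iff_fiber_meets_closure {X Y : Type*}
    [TopologicalSpace X] [TopologicalSpace Y]
    (f : X → Y) (hf : Continuous f) (hsurj : Function.Surjective f) :
    KappaPseudoOpen f ↔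
      ∀ U : Set Y, IsOpen U → ¬ IsClosed U → ∀ y ∈ closure U \ U,
        (f ⁻¹' {y} ∩ closure (f ⁻¹' U)).Nonempty := by
  constructor
  · intro h U hU hUc y hy
    by_contra hne
    rw [Set.not_nonempty_iff_eq_empty] at hne
    have hsub : f ⁻¹' {y} ⊆ (closure (f ⁻¹' U))ᶜ := by
      intro x hx hxc
      exact Set.eq_empty_iff_forall_notMem.mp hne x ⟨hx, hxc⟩
    have hmem := h y _ isClosed_closure.isOpen_compl hsub
    have himg : f '' (closure (f ⁻¹' U))ᶜ ⊆ Uᶜ := by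
      rintro v ⟨x, hx, rfl⟩ hvU
      exact hx (subset_closure hvU)
    have hcl : closure (f '' (closure (f ⁻¹' U))ᶜ) ⊆ Uᶜ :=
      (IsClosed.closure_subset_iff hU.isClosed_compl).mpr himg
    obtain ⟨z, hz1, hz2⟩ := mem_closure_iff.mp hy.1 _ isOpen_interior hmem
    exact hcl (interior_subset hz1) hz2
  · intro h y U hU hfib
    by_contra hy
    set W := (closure (f '' U))ᶜ with hW
    have hyW : y ∉ W := by
      obtain ⟨x, rfl⟩ := hsurj y
      exact fun hc => hc (subset_closure ⟨x, hfib rfl, rfl⟩)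
    have hycl : y ∈ closure W := by
      rw [hW, closure_compl]
      exact hy
    have hWnc : ¬ IsClosed W := fun hc => hyW (hc.closure_subset hycl)
    obtain ⟨x, hx1, hx2⟩ := h W isClosed_closure.isOpen_compl hWnc y ⟨hycl, hyW⟩
    have hdis : f ⁻¹' W ⊆ Uᶜ := fun u hu huU => hu (subset_closure ⟨u, huU, rfl⟩)
    have : closure (f ⁻¹' W) ⊆ Uᶜ :=
      (IsClosed.closure_subset_iff hU.isClosed_compl).mpr hdis
    exact this hx2 (hfib hx1)
end

section
/- If f : X → Y is a κ-pseudo open continuous surjection and X is κ-Fréchet–Urysohn, then Y is κ-Fréchet–Urysohn. Similarly, if X is open-compact attainable then Y is open-compact attainable. -/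
open Filter Topology Set

theorem kappaPseudoOpen_image {X Y : Type*} [TopologicalSpace X] [TopologicalSpace Y]
    (f : X → Y) (hf : Continuous f) (hsurj : Function.Surjective f)
    (h : KappaPseudoOpen f) :
    (KappaFU X → KappaFU Y) ∧ (OCA X → OCA Y) := by
  have key : ∀ V : Set Y, IsOpen V → ∀ y ∈ closure V,
      ∃ x, f x = y ∧ x ∈ closure (f ⁻¹' V) := by
    intro V hV y hy
    by_contra hc
    push_neg at hc
    have hsub : f ⁻¹' {y} ⊆ (closure (f ⁻¹' V))ᶜ := by
      intro x hx
      exact hc x hx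
    have hmem := h y _ isClosed_closure.isOpen_compl hsub
    have himg : closure (f '' (closure (f ⁻¹' V))ᶜ) ⊆ Vᶜ := by
      apply closure_minimal _ hV.isClosed_compl
      rintro _ ⟨x, hx, rfl⟩ hfx
      exact hx (subset_closure hfx)
    have : interior (closure (f '' (closure (f ⁻¹' V))ᶜ)) ∩ V ≠ ∅ := by
      rw [← nonempty_iff_ne_empty]
      exact mem_closure_iff.mp hy _ isOpen_interior hmem
    apply this
    rw [eq_empty_iff_forall_notMem]
    rintro z ⟨hz1, hz2⟩
    exact himg (interior_subset hz1) hz2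
  constructor
  · intro hX V hV y hy
    obtain ⟨x, rfl, hx⟩ := key V hV y hy
    obtain ⟨u, hu, hconv⟩ := hX _ (hV.preimage hf) x hx
    exact ⟨f ∘ u, fun n => hu n, (hf.tendsto x).comp hconv⟩
  · intro hX V hV y hy
    obtain ⟨x, rfl, hx⟩ := key V hV y hy
    obtain ⟨K, hK, hxK, hxcl⟩ := hX _ (hV.preimage hf) x hx
    refine ⟨f '' K, hK.image hf, mem_image_of_mem f hxK, ?_⟩
    have h1 : f x ∈ closure (f '' (K ∩ f ⁻¹' V)) :=
      (image_closure_subset_closure_image hf) (mem_image_of_mem f hxcl)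
    refine closure_mono ?_ h1
    rintro _ ⟨a, ⟨haK, haV⟩, rfl⟩
    exact ⟨mem_image_of_mem f haK, haV⟩
end

section
/- If f : X → Y is a weakly κ-pseudo open continuous surjection and X is κ-sequential (respectively, weakly open-compact attainable), then Y is κ-sequential (respectively, weakly open-compact attainable). -/
open Filter Topology Set

theorem weaklyKappaPseudoOpen_image {X Y : Type*} [TopologicalSpace X] [TopologicalSpace Y]
    (f : X → Y) (hf : Continuous f) (hsurj : Function.Surjective f)
    (h : WeaklyKappaPseudoOpen f) :
    (KappaSeq X → KappaSeq Y) ∧ (WOCA X → WOCA Y) := by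
  have key : ∀ U : Set Y, IsOpen U → ¬ IsClosed U →
      IsOpen (f ⁻¹' U) ∧ ¬ IsClosed (f ⁻¹' U) ∧
      ∀ z ∈ closure (f ⁻¹' U) \ f ⁻¹' U, f z ∈ closure U \ U := by
    intro U hU hnc
    refine ⟨hU.preimage hf, fun hc => hnc ((h U hU).mpr hc), ?_⟩
    rintro z ⟨hz1, hz2⟩
    exact ⟨(Continuous.closure_preimage_subset hf U) hz1, hz2⟩
  constructor
  · intro hX U hU hnc
    obtain ⟨ho, hnc', himg⟩ := key U hU hnc
    obtain ⟨z, hz, u, hu, htu⟩ := hX _ ho hnc'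
    exact ⟨f z, himg z hz, f ∘ u, fun n => hu n, (hf.tendsto z).comp htu⟩
  · intro hX U hU hnc
    obtain ⟨ho, hnc', himg⟩ := key U hU hnc
    obtain ⟨z, hz, K, hK, hzK, hzc⟩ := hX _ ho hnc'
    refine ⟨f z, himg z hz, f '' K, hK.image hf, ⟨z, hzK, rfl⟩, ?_⟩
    have : f z ∈ closure (f '' (K ∩ f ⁻¹' U)) :=
      (Continuous.closure_preimage_subset hf _) (closure_mono (subset_preimage_image f _) hzc)
    exact closure_mono (by rintro y ⟨x, ⟨hxK, hxU⟩, rfl⟩; exact ⟨⟨x, hxK, rfl⟩, hxU⟩) this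
end

section
/- Let X and Y be topological spaces that are both κ-sequential, with X connected. Then the product X × Y is κ-sequential. Analogously, if X and Y are both weakly open-compact attainable and X is connected, then X × Y is weakly open-compact attainable. -/
open Filter Topology Set

set_option linter.unusedSectionVars false

section Aux

variable {X Y : Type*} [TopologicalSpace X] [TopologicalSpace Y] [ConnectedSpace X]

/-- Slice of a set at `y`. -/
private def sliceX (W : Set (X × Y)) (y : Y) : Set X := {x | (x, y) ∈ W}

private lemma sliceX_open {W : Set (X × Y)} (hW : IsOpen W) (y : Y) :
    IsOpen (sliceX W y) :=
  hW.preimage (Continuous.prodMk_left y)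

/-- Dichotomy for open non-closed subsets of a product with connected first factor. -/
private lemma dichotomy (x₀ : X) {W : Set (X × Y)} (hW : IsOpen W) (hWc : ¬ IsClosed W) :
    (∃ y : Y, ¬ IsClosed (sliceX W y)) ∨
    (¬ IsClosed {y | (x₀, y) ∈ W} ∧ W = Prod.snd ⁻¹' {y | (x₀, y) ∈ W}) := by
  by_cases h : ∃ y : Y, ¬ IsClosed (sliceX W y)
  · exact Or.inl h
  · push_neg at h
    right
    have hfull : ∀ y : Y, sliceX W y = ∅ ∨ sliceX W y = univ := by
      intro y
      have : IsClopen (sliceX W y) := ⟨h y, sliceX_open hW y⟩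
      exact isClopen_iff.mp this
    have hEq : W = Prod.snd ⁻¹' {y | (x₀, y) ∈ W} := by
      ext ⟨x, y⟩
      simp only [mem_preimage, mem_setOf_eq]
      rcases hfull y with he | hu
      · constructor
        · intro hx; exact absurd (show x ∈ sliceX W y from hx) (by simp [he])
        · intro hx; exact absurd (show x₀ ∈ sliceX W y from hx) (by simp [he])
      · constructor
        · intro _; exact (hu ▸ (mem_univ x₀) : x₀ ∈ sliceX W y)
        · intro _; exact (hu ▸ (mem_univ x) : x ∈ sliceX W y)
    refine ⟨fun hB => hWc ?_, hEq⟩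
    rw [hEq]
    exact hB.preimage continuous_snd

private lemma slice_nonclosed_closure {W : Set (X × Y)} {y : Y} {z : X}
    (hz : z ∈ closure (sliceX W y)) : (z, y) ∈ closure W := by
  have := (Continuous.prodMk_left y).closure_preimage_subset W hz
  exact this

end Aux

theorem prod_kappaSeq_WOCA (X Y : Type*) [TopologicalSpace X] [TopologicalSpace Y]
    [ConnectedSpace X] :
    (KappaSeq X → KappaSeq Y → KappaSeq (X × Y)) ∧
    (WOCA X → WOCA Y → WOCA (X × Y)) := by
  have x₀ : X := Classical.arbitrary X
  constructor
  · intro hX hY W hW hWc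
    rcases dichotomy x₀ hW hWc with ⟨y, hy⟩ | ⟨hB, hEq⟩
    · obtain ⟨z, ⟨hzc, hznW⟩, u, huW, hu⟩ := hX (sliceX W y) (sliceX_open hW y) hy
      refine ⟨(z, y), ⟨slice_nonclosed_closure hzc, hznW⟩, fun n => (u n, y),
        fun n => huW n, ?_⟩
      exact hu.prodMk_nhds tendsto_const_nhds
    · set B := {y | (x₀, y) ∈ W} with hBdef
      have hBopen : IsOpen B := hW.preimage (Continuous.prodMk_right x₀)
      obtain ⟨z, ⟨hzc, hznB⟩, v, hvB, hv⟩ := hY B hBopen hB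
      have hmem : ∀ n, (x₀, v n) ∈ W := fun n => by rw [hEq]; exact hvB n
      refine ⟨(x₀, z), ⟨?_, ?_⟩, fun n => (x₀, v n), hmem, ?_⟩
      · exact mem_closure_of_tendsto (tendsto_const_nhds.prodMk_nhds hv)
          (Filter.Eventually.of_forall hmem)
      · rw [hEq]; exact hznB
      · exact tendsto_const_nhds.prodMk_nhds hv
  · intro hX hY W hW hWc
    rcases dichotomy x₀ hW hWc with ⟨y, hy⟩ | ⟨hB, hEq⟩
    · obtain ⟨z, ⟨hzc, hznW⟩, K, hK, hzK, hzcl⟩ := hX (sliceX W y) (sliceX_open hW y) hy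
      refine ⟨(z, y), ⟨slice_nonclosed_closure hzc, hznW⟩, K ×ˢ ({y} : Set Y),
        hK.prod isCompact_singleton, ⟨hzK, rfl⟩, ?_⟩
      have hsub : (K ∩ sliceX W y) ×ˢ ({y} : Set Y) ⊆ (K ×ˢ ({y} : Set Y)) ∩ W := by
        rintro ⟨x, y'⟩ ⟨⟨hxK, hxW⟩, hy'⟩
        rcases hy' with rfl
        exact ⟨⟨hxK, rfl⟩, hxW⟩
      refine closure_mono hsub ?_
      rw [closure_prod_eq]
      exact ⟨hzcl, subset_closure rfl⟩
    · set B := {y | (x₀, y) ∈ W} with hBdef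
      have hBopen : IsOpen B := hW.preimage (Continuous.prodMk_right x₀)
      obtain ⟨z, ⟨hzc, hznB⟩, K, hK, hzK, hzcl⟩ := hY B hBopen hB
      refine ⟨(x₀, z), ⟨?_, ?_⟩, ({x₀} : Set X) ×ˢ K,
        isCompact_singleton.prod hK, ⟨rfl, hzK⟩, ?_⟩
      · have : (x₀, z) ∈ closure (({x₀} : Set X) ×ˢ B) := by
          rw [closure_prod_eq]; exact ⟨subset_closure rfl, hzc⟩
        refine closure_mono ?_ this
        rintro ⟨x, y'⟩ ⟨hx, hy'⟩
        rcases hx with rfl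
        rw [hEq]; exact hy'
      · rw [hEq]; exact hznB
      · have hsub : ({x₀} : Set X) ×ˢ (K ∩ B) ⊆ (({x₀} : Set X) ×ˢ K) ∩ W := by
          rintro ⟨x, y'⟩ ⟨hx, hK', hB'⟩
          rcases hx with rfl
          exact ⟨⟨rfl, hK'⟩, by rw [hEq]; exact hB'⟩
        refine closure_mono hsub ?_
        rw [closure_prod_eq]
        exact ⟨subset_closure rfl, hzcl⟩
end
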